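/- If α is a quadratic irrational, then the sequence ((q_n − p_n) mod m) is ultimately periodic for any positive integer m, where p_n/q_n are the convergents of α. -/

import Mathlib

/-- Auxiliary numerators: `pAux d (n+2) = p_n` with `p_{-2} = 0`, `p_{-1} = 1`. -/
def pAux (d : ℕ → ℕ) : ℕ → ℕ
  | 0 => 0
  | 1 => 1
  | (n+2) => d n * pAux d (n+1) + pAux d n

/-- Auxiliary denominators: `qAux d (n+2) = q_n` with `q_{-2} = 1`, `q_{-1} = 0`. -/
def qAux (d : ℕ → ℕ) : ℕ → ℕ
  | 0 => 1
  | 1 => 0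
  | (n+2) => d n * qAux d (n+1) + qAux d n

/-- The numerator `p_n` of the `n`-th convergent of `[d 0; d 1, d 2, ...]`. -/
def pconv (d : ℕ → ℕ) (n : ℕ) : ℕ := pAux d (n+2)

/-- The denominator `q_n` of the `n`-th convergent of `[d 0; d 1, d 2, ...]`. -/
def qconv (d : ℕ → ℕ) (n : ℕ) : ℕ := qAux d (n+2)

/-- `α` is a quadratic irrational. -/
def QuadraticIrrational (α : ℝ) : Prop :=
  Irrational α ∧ ∃ A B C : ℤ, A ≠ 0 ∧ (A : ℝ) * α ^ 2 + (B : ℝ) * α + (C : ℝ) = 0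

/-!
Write `u_n = |q_n α - p_n|` and `α_n = u_n / u_{n+1}` for the complete quotients, so that
`d_n = ⌊α_n⌋` and `α_{n+1} = 1 / (α_n - d_n)`. Substituting
`α = (p_{n+1} α_n + p_n) / (q_{n+1} α_n + q_n)` into `A α² + B α + C = 0` makes `α_n` a root of
an integer quadratic whose outer coefficients are values of `A x² + B x y + C y²` at consecutive
convergents. As `u_n ≤ 1` and `q_n u_n ≤ 1`, these values are bounded, and the discriminant is
invariant under the unimodular substitution, which bounds the middle coefficient. So the `α_n` take
finitely many values and, being generated by a fixed map, are ultimately periodic, hence so are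
the `d_n` (Lagrange). Finally `q_n - p_n` obeys the recurrence of the convergents, whose
coefficients `d_n` are ultimately periodic; modulo `m` the pairs of consecutive terms range over a
finite set, so they repeat.
-/

open Filter Topology

def UltimatelyPeriodic {σ : Type*} (f : ℕ → σ) : Prop :=
  ∃ N T : ℕ, 0 < T ∧ ∀ n : ℕ, N ≤ n → f (n + T) = f n

namespace UltimatelyPeriodic

variable {σ τ : Type*}

theorem const (x : σ) : UltimatelyPeriodic fun _ : ℕ => x :=
  ⟨0, 1, one_pos, fun _ _ => rfl⟩

theorem map {f : ℕ → σ} (hf : UltimatelyPeriodic f) (g : σ → τ) :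
    UltimatelyPeriodic (g ∘ f) := by
  obtain ⟨N, T, hT, h⟩ := hf
  exact ⟨N, T, hT, fun n hn => congrArg g (h n hn)⟩

theorem comp_add {f : ℕ → σ} (hf : UltimatelyPeriodic f) (k : ℕ) :
    UltimatelyPeriodic fun n => f (n + k) := by
  obtain ⟨N, T, hT, h⟩ := hf
  exact ⟨N, T, hT, fun n hn => by simpa only [Nat.add_right_comm] using h (n + k) (by omega)⟩

/-- Pigeonhole: two indices beyond the periodicity threshold of `G`, congruent modulo its
period, carry the same value of `s`; from then on `s` repeats. -/
theorem of_finite_range_of_rec {s : ℕ → σ} (hs : (Set.range s).Finite) {G : ℕ → σ → σ}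
    (hG : UltimatelyPeriodic G) (hrec : ∀ n, s (n + 1) = G n (s n)) :
    UltimatelyPeriodic s := by
  obtain ⟨N, T, hT, hGT⟩ := hG
  have hGper : Function.Periodic (fun k => G (N + k)) T := fun k => by
    simpa only [Nat.add_assoc] using hGT (N + k) (by omega)
  obtain ⟨i, j, hij, hfij⟩ := Set.Finite.exists_lt_map_eq_of_forall_mem
    (f := fun k => ((N + k) % T, s (N + k))) (t := Set.Iio T ×ˢ Set.range s)
    (fun k => ⟨Nat.mod_lt _ hT, k + N, by rw [Nat.add_comm]⟩) ((Set.finite_Iio T).prod hs)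
  obtain ⟨hmod, hsij⟩ := Prod.mk.inj hfij
  obtain ⟨c, hc⟩ : T ∣ j - i := by
    have := Nat.sub_mod_eq_zero_of_mod_eq hmod.symm
    rw [show N + j - (N + i) = j - i by omega] at this
    exact Nat.dvd_of_mod_eq_zero this
  refine ⟨N + i, j - i, by omega, fun n hn => ?_⟩
  induction n, hn using Nat.le_induction with
  | base => rw [show N + i + (j - i) = N + j by omega]; exact hsij.symm
  | succ n hn ih =>
    have hGn : G (n + (j - i)) = G n := by
      have := hGper.nat_mul c (n - N)
      simp only [Nat.cast_id] at this
      rwa [show N + (n - N + c * T) = n + (j - i) by rw [hc, Nat.mul_comm]; omega,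
        show N + (n - N) = n by omega] at this
    rw [Nat.add_right_comm, hrec, hrec, hGn, ih]

theorem of_linearRec {R : Type*} [Semiring R] [Finite R] {c r : ℕ → R}
    (hc : UltimatelyPeriodic c) (hr : ∀ n, r (n + 2) = c n * r (n + 1) + r n) :
    UltimatelyPeriodic r := by
  have hpair : UltimatelyPeriodic fun n => (r n, r (n + 1)) :=
    of_finite_range_of_rec (Set.toFinite _) (hc.map fun a v => (v.2, a * v.2 + v.1))
      fun n => by simp [hr]
  exact hpair.map Prod.fst

end UltimatelyPeriodic

section Continuants

variable (d : ℕ → ℕ)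

theorem pAux_add_two (n : ℕ) : pAux d (n + 2) = d n * pAux d (n + 1) + pAux d n := rfl

theorem qAux_add_two (n : ℕ) : qAux d (n + 2) = d n * qAux d (n + 1) + qAux d n := rfl

theorem pAux_mul_qAux_sub (n : ℕ) :
    (pAux d (n + 1) * qAux d n - pAux d n * qAux d (n + 1) : ℤ) = (-1) ^ n := by
  induction n with
  | zero => simp [pAux, qAux]
  | succ k ih =>
    rw [pAux_add_two, qAux_add_two]
    push_cast
    linear_combination -ih

theorem pAux_mul_qAux_sub_two (n : ℕ) :
    (pAux d (n + 4) * qAux d (n + 2) - pAux d (n + 2) * qAux d (n + 4) : ℤ) =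
      d (n + 2) * (-1) ^ n := by
  rw [pAux_add_two d (n + 2), qAux_add_two d (n + 2)]
  push_cast
  linear_combination (d (n + 2) : ℤ) * pAux_mul_qAux_sub d (n + 2)

variable {d}

theorem qAux_pos (hd : ∀ i, 1 ≤ d (i + 1)) (n : ℕ) : 0 < qAux d (n + 2) := by
  induction n with
  | zero => simp [qAux]
  | succ k ih => rw [qAux_add_two]; exact Nat.add_pos_left (Nat.mul_pos (hd k) ih) _

theorem pAux_le_qAux (hd0 : d 0 = 0) (hd1 : 1 ≤ d 1) (n : ℕ) :
    pAux d (n + 2) ≤ qAux d (n + 2) := by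
  induction n using Nat.twoStepInduction with
  | zero => simp [pAux, qAux, hd0]
  | one => simpa [pAux, qAux, hd0] using hd1
  | more k ih ih' =>
    rw [pAux_add_two, qAux_add_two]
    exact Nat.add_le_add (Nat.mul_le_mul_left _ ih') ih

end Continuants

theorem neg_one_pow_sq {R : Type*} [Monoid R] [HasDistribNeg R] (n : ℕ) :
    ((-1 : R) ^ n) ^ 2 = 1 := by
  rw [← pow_mul, pow_mul', neg_one_sq, one_pow]

theorem neg_one_pow_mul_sub_pos_of_tendsto {c : ℕ → ℝ} {α : ℝ}
    (hc : ∀ n, 0 < (-1) ^ n * (c (n + 2) - c n)) (hlim : Tendsto c atTop (𝓝 α)) (n : ℕ) :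
    0 < (-1) ^ n * (α - c n) := by
  set g : ℕ → ℝ := fun k => (-1) ^ n * c (n + 2 * k) with hg
  have hmono : StrictMono g := strictMono_nat_of_lt_succ fun k => by
    have h := hc (n + 2 * k)
    rw [pow_add, pow_mul, neg_one_sq, one_pow, mul_one, mul_sub] at h
    simp only [hg, show n + 2 * (k + 1) = n + 2 * k + 2 by ring]
    linarith
  have hglim : Tendsto g atTop (𝓝 ((-1) ^ n * α)) :=
    (hlim.comp (tendsto_atTop_mono (fun k => (by omega : k ≤ n + 2 * k)) tendsto_id)).const_mul _
  have h01 := hmono zero_lt_one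
  have h1 := hmono.monotone.ge_of_tendsto hglim 1
  simp only [hg, mul_zero, add_zero] at h01 h1
  linarith [mul_sub ((-1 : ℝ) ^ n) α (c n)]

section Convergents

variable {d : ℕ → ℕ} {α : ℝ}

theorem neg_one_pow_mul_convergent_sub_pos (hd : ∀ i, 1 ≤ d (i + 1)) (n : ℕ) :
    0 < (-1) ^ n * ((pconv d (n + 2) : ℝ) / qconv d (n + 2) - pconv d n / qconv d n) := by
  have hq : (0 : ℝ) < qAux d (n + 2) := by exact_mod_cast qAux_pos hd n
  have hq' : (0 : ℝ) < qAux d (n + 4) := by exact_mod_cast qAux_pos hd (n + 2)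
  have hdet : (pAux d (n + 4) * qAux d (n + 2) - pAux d (n + 2) * qAux d (n + 4) : ℝ) =
      d (n + 2) * (-1) ^ n := by exact_mod_cast pAux_mul_qAux_sub_two d n
  have hd' : (1 : ℝ) ≤ d (n + 2) := by exact_mod_cast hd (n + 1)
  show 0 < (-1) ^ n * ((pAux d (n + 4) : ℝ) / qAux d (n + 4) - pAux d (n + 2) / qAux d (n + 2))
  rw [div_sub_div _ _ hq'.ne' hq.ne', mul_div_assoc']
  refine div_pos ?_ (mul_pos hq' hq)
  have : (-1) ^ n * (pAux d (n + 4) * qAux d (n + 2) - qAux d (n + 4) * pAux d (n + 2) : ℝ) =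
      d (n + 2) := by
    linear_combination (-1 : ℝ) ^ n * hdet + d (n + 2) * neg_one_pow_sq (R := ℝ) n
  linarith

/-- The sign makes it positive (`errAux_pos`): `errAux d α n = |q_n α - p_n|` in the shifted
indexing of `pAux`, `qAux`. -/
noncomputable def errAux (d : ℕ → ℕ) (α : ℝ) (n : ℕ) : ℝ :=
  (-1) ^ n * (qAux d n * α - pAux d n)

theorem errAux_add_two (n : ℕ) :
    errAux d α (n + 2) = errAux d α n - d n * errAux d α (n + 1) := by
  simp only [errAux, pAux_add_two, qAux_add_two]
  push_cast
  ring

theorem qAux_mul_errAux_add (n : ℕ) :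
    qAux d (n + 1) * errAux d α n + qAux d n * errAux d α (n + 1) = 1 := by
  have hdet : (pAux d (n + 1) * qAux d n - pAux d n * qAux d (n + 1) : ℝ) = (-1) ^ n := by
    exact_mod_cast pAux_mul_qAux_sub d n
  simp only [errAux]
  linear_combination (-1 : ℝ) ^ n * hdet + neg_one_pow_sq (R := ℝ) n

variable (hd : ∀ i, 1 ≤ d (i + 1))
  (hcf : Tendsto (fun n => (pconv d n : ℝ) / (qconv d n : ℝ)) atTop (𝓝 α))
include hd hcf

theorem errAux_pos (n : ℕ) : 0 < errAux d α (n + 1) := by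
  cases n with
  | zero => simp [errAux, pAux, qAux]
  | succ n =>
    have hq : (0 : ℝ) < qAux d (n + 2) := by exact_mod_cast qAux_pos hd n
    have hsign := neg_one_pow_mul_sub_pos_of_tendsto (neg_one_pow_mul_convergent_sub_pos hd) hcf n
    have : errAux d α (n + 2) = qAux d (n + 2) * ((-1) ^ n * (α - pconv d n / qconv d n)) := by
      simp only [errAux, pconv, qconv]
      field_simp
      ring
    rw [this]
    exact mul_pos hq hsign

theorem errAux_lt (n : ℕ) : errAux d α (n + 2) < errAux d α (n + 1) := by
  have h := errAux_add_two (d := d) (α := α) (n + 1)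
  have hpos := errAux_pos hd hcf (n + 2)
  have hle : errAux d α (n + 2) ≤ d (n + 1) * errAux d α (n + 2) :=
    le_mul_of_one_le_left (errAux_pos hd hcf (n + 1)).le (by exact_mod_cast hd n)
  linarith

theorem errAux_le_one (n : ℕ) : errAux d α (n + 1) ≤ 1 := by
  induction n with
  | zero => simp [errAux, pAux, qAux]
  | succ k ih => exact (errAux_lt hd hcf k).le.trans ih

theorem qAux_mul_errAux_le_one (n : ℕ) : qAux d (n + 1) * errAux d α (n + 1) ≤ 1 := by
  cases n with
  | zero => simp [qAux]
  | succ k =>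
    have h := qAux_mul_errAux_add (d := d) (α := α) (k + 1)
    have h1 : (qAux d (k + 2) : ℝ) * errAux d α (k + 2) ≤ qAux d (k + 2) * errAux d α (k + 1) :=
      mul_le_mul_of_nonneg_left (errAux_lt hd hcf k).le (Nat.cast_nonneg _)
    have h2 : 0 ≤ (qAux d (k + 1) : ℝ) * errAux d α (k + 2) :=
      mul_nonneg (Nat.cast_nonneg _) (errAux_pos hd hcf (k + 1)).le
    linarith

theorem abs_qAux_mul_sub_pAux (n : ℕ) :
    |(qAux d (n + 1) : ℝ) * α - pAux d (n + 1)| = errAux d α (n + 1) := by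
  rw [← abs_of_pos (errAux_pos hd hcf n), errAux, abs_mul, abs_pow, abs_neg, abs_one, one_pow,
    one_mul]

end Convergents

section CompleteQuotients

variable {d : ℕ → ℕ} {α : ℝ}

noncomputable def complQuot (d : ℕ → ℕ) (α : ℝ) (n : ℕ) : ℝ :=
  errAux d α n / errAux d α (n + 1)

variable (hd : ∀ i, 1 ≤ d (i + 1))
  (hcf : Tendsto (fun n => (pconv d n : ℝ) / (qconv d n : ℝ)) atTop (𝓝 α))
include hd hcf

theorem complQuot_sub (n : ℕ) :
    complQuot d α n - d n = errAux d α (n + 2) / errAux d α (n + 1) := by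
  have hne := (errAux_pos hd hcf n).ne'
  rw [complQuot, errAux_add_two]
  field_simp

theorem floor_complQuot (n : ℕ) : ⌊complQuot d α n⌋ = d n := by
  have h1 := errAux_pos hd hcf n
  have h2 := errAux_pos hd hcf (n + 1)
  have hfrac := complQuot_sub hd hcf n
  have hlt : errAux d α (n + 2) / errAux d α (n + 1) < 1 :=
    (div_lt_one h1).mpr (errAux_lt hd hcf n)
  rw [Int.floor_eq_iff, Int.cast_natCast]
  constructor <;> linarith [div_pos h2 h1]

theorem complQuot_succ (n : ℕ) :
    complQuot d α (n + 1) = (complQuot d α n - ⌊complQuot d α n⌋)⁻¹ := by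
  rw [floor_complQuot hd hcf, Int.cast_natCast, complQuot_sub hd hcf, inv_div, complQuot]

end CompleteQuotients

section QuadraticForms

def quadForm (A B C x y : ℤ) : ℤ := A * x ^ 2 + B * x * y + C * y ^ 2

def quadPolar (A B C x y x' y' : ℤ) : ℤ := 2 * A * x * x' + B * (x * y' + x' * y) + 2 * C * y * y'

variable {A B C : ℤ} {α : ℝ}

theorem discrim_quadForm_quadPolar (x y x' y' : ℤ) :
    discrim (quadForm A B C x y) (quadPolar A B C x y x' y') (quadForm A B C x' y') =
      discrim A B C * (x * y' - x' * y) ^ 2 := by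
  simp only [discrim, quadForm, quadPolar]
  ring

theorem abs_le_abs_discrim_add_of_abs_le (b : ℤ) {a c : ℤ} {N : ℕ} (ha : |a| ≤ N)
    (hc : |c| ≤ N) : |b| ≤ |discrim a b c| + 4 * N ^ 2 := by
  have hb := Int.natAbs_le_self_sq b
  rw [Int.natCast_natAbs] at hb
  have hac := (le_abs_self _).trans ((abs_mul a c).trans_le
    (mul_le_mul ha hc (abs_nonneg _) (Nat.cast_nonneg N)))
  linarith [le_abs_self (discrim a b c), show discrim a b c = b ^ 2 - 4 * a * c from rfl]

variable (hα : A * α ^ 2 + B * α + C = 0)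
include hα

theorem quadForm_eq (x y : ℤ) :
    (quadForm A B C x y : ℝ) = A * (y * α - x) ^ 2 - (2 * A * α + B) * y * (y * α - x) := by
  simp only [quadForm]
  push_cast
  linear_combination (y : ℝ) ^ 2 * hα

theorem abs_quadForm_le {x y : ℤ} (h1 : |y * α - x| ≤ 1) (h2 : |(y : ℝ)| * |y * α - x| ≤ 1) :
    |(quadForm A B C x y : ℝ)| ≤ |(A : ℝ)| + |2 * A * α + B| := by
  rw [quadForm_eq hα]
  calc _ ≤ |(A : ℝ)| * |y * α - x| ^ 2 + |2 * A * α + B| * (|(y : ℝ)| * |y * α - x|) := by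
        refine (abs_sub _ _).trans_eq ?_
        rw [abs_mul, abs_mul, abs_mul, abs_pow, mul_assoc]
    _ ≤ |(A : ℝ)| * 1 + |2 * A * α + B| * 1 := by
        gcongr
        exact pow_le_one₀ (abs_nonneg _) h1
    _ = _ := by ring

theorem quadForm_ne_zero (hirr : Irrational α) (hA : A ≠ 0) {x y : ℤ} (hy : y ≠ 0) :
    quadForm A B C x y ≠ 0 := by
  intro h
  have hfac : (y * α - x) * (A * (y * α + x) + B * y) = 0 := by
    have h' : (quadForm A B C x y : ℝ) = 0 := by exact_mod_cast h
    simp only [quadForm] at h'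
    push_cast at h'
    linear_combination (y : ℝ) ^ 2 * hα - h'
  rw [irrational_iff_ne_rational] at hirr
  rcases mul_eq_zero.mp hfac with hE | hW
  · exact hirr x y hy (by field_simp; linarith)
  · have hAy : A * y ≠ 0 := mul_ne_zero hA hy
    exact hirr (-(A * x + B * y)) (A * y) hAy (by field_simp; push_cast; linarith)

end QuadraticForms

theorem finite_setOf_quadratic_root (M : ℕ) :
    {x : ℝ | ∃ a b c : ℤ, a ≠ 0 ∧ |a| ≤ M ∧ |b| ≤ M ∧ |c| ≤ M ∧
      a * x ^ 2 + b * x + c = 0}.Finite := by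
  open Polynomial in
  set I := Finset.Icc (-(M : ℤ)) M
  set S := (I ×ˢ I ×ˢ I).filter fun t => t.1 ≠ 0
  refine (S.finite_toSet.biUnion fun t ht => finite_setOfPred_isRoot
    (p := C (t.1 : ℝ) * X ^ 2 + C (t.2.1 : ℝ) * X + C (t.2.2 : ℝ)) ?_).subset ?_
  · have ht : (t.1 : ℝ) ≠ 0 := Int.cast_ne_zero.mpr (Finset.mem_filter.mp ht).2
    exact leadingCoeff_ne_zero.mp (by rwa [leadingCoeff_quadratic ht])
  · rintro x ⟨a, b, c, ha, haM, hbM, hcM, hx⟩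
    simp only [Set.mem_iUnion]
    refine ⟨(a, b, c), ?_, by simpa using hx⟩
    simp [S, I, ha, ← abs_le, haM, hbM, hcM]

section PartialQuotients

variable {d : ℕ → ℕ} {α : ℝ} {A B C : ℤ}
  (hd : ∀ i, 1 ≤ d (i + 1))
  (hcf : Tendsto (fun n => (pconv d n : ℝ) / (qconv d n : ℝ)) atTop (𝓝 α))
  (hα : A * α ^ 2 + B * α + C = 0)
include hd hcf hα

theorem quadratic_complQuot (n : ℕ) :
    (quadForm A B C (pAux d (n + 1)) (qAux d (n + 1)) : ℝ) * complQuot d α n ^ 2 +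
      (quadPolar A B C (pAux d (n + 1)) (qAux d (n + 1)) (pAux d n) (qAux d n) : ℝ) *
        complQuot d α n + (quadForm A B C (pAux d n) (qAux d n) : ℝ) = 0 := by
  set X := complQuot d α n
  have hX : X * errAux d α (n + 1) = errAux d α n :=
    div_mul_cancel₀ _ (errAux_pos hd hcf n).ne'
  have hrel : α * (X * qAux d (n + 1) + qAux d n) = X * pAux d (n + 1) + pAux d n := by
    simp only [errAux] at hX
    linear_combination (-(-1 : ℝ) ^ n) * hX -
      (X * (qAux d (n + 1) * α - pAux d (n + 1)) + (qAux d n * α - pAux d n)) *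
        neg_one_pow_sq (R := ℝ) n
  simp only [quadForm, quadPolar]
  push_cast
  linear_combination (X * qAux d (n + 1) + qAux d n : ℝ) ^ 2 * hα -
    (A * (X * pAux d (n + 1) + pAux d n + α * (X * qAux d (n + 1) + qAux d n)) +
      B * (X * qAux d (n + 1) + qAux d n) : ℝ) * hrel

theorem abs_quadForm_pAux_le (n : ℕ) :
    |(quadForm A B C (pAux d (n + 1)) (qAux d (n + 1)) : ℝ)| ≤ |(A : ℝ)| + |2 * A * α + B| := by
  have hE := abs_qAux_mul_sub_pAux hd hcf n
  refine abs_quadForm_le hα ?_ ?_ <;> push_cast <;> rw [hE]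
  · exact errAux_le_one hd hcf n
  · rw [Nat.abs_cast]; exact qAux_mul_errAux_le_one hd hcf n

theorem finite_range_complQuot (hirr : Irrational α) (hA : A ≠ 0) :
    (Set.range fun n => complQuot d α (n + 1)).Finite := by
  obtain ⟨N, hN⟩ : ∃ N : ℕ, ∀ n, |quadForm A B C (pAux d (n + 1)) (qAux d (n + 1))| ≤ N :=
    ⟨⌈|(A : ℝ)| + |2 * A * α + B|⌉₊, fun n => by
      have := (abs_quadForm_pAux_le hd hcf hα n).trans (Nat.le_ceil _)
      exact_mod_cast this⟩
  refine (finite_setOf_quadratic_root (N + (discrim A B C).natAbs + 4 * N ^ 2)).subset ?_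
  rintro _ ⟨n, rfl⟩
  have hdisc := discrim_quadForm_quadPolar (A := A) (B := B) (C := C) (pAux d (n + 1 + 1))
    (qAux d (n + 1 + 1)) (pAux d (n + 1)) (qAux d (n + 1))
  rw [pAux_mul_qAux_sub, neg_one_pow_sq, mul_one] at hdisc
  have hb := abs_le_abs_discrim_add_of_abs_le (quadPolar A B C (pAux d (n + 1 + 1))
    (qAux d (n + 1 + 1)) (pAux d (n + 1)) (qAux d (n + 1))) (hN (n + 1)) (hN n)
  rw [hdisc] at hb
  refine ⟨_, _, _, quadForm_ne_zero hα hirr hA (by exact_mod_cast (qAux_pos hd n).ne'),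
    ?_, ?_, ?_, quadratic_complQuot hd hcf hα (n + 1)⟩ <;> push_cast <;>
    linarith [hN (n + 1), hN n, abs_nonneg (discrim A B C), sq_nonneg (N : ℤ)]

theorem ultimatelyPeriodic_partialQuot (hirr : Irrational α) (hA : A ≠ 0) :
    UltimatelyPeriodic fun n => d (n + 1) := by
  have hX : UltimatelyPeriodic fun n => complQuot d α (n + 1) :=
    .of_finite_range_of_rec (finite_range_complQuot hd hcf hα hirr hA)
      (.const fun x : ℝ => (x - ⌊x⌋)⁻¹) fun n => complQuot_succ hd hcf (n + 1)
  have : (fun n => d (n + 1)) = (fun x => ⌊x⌋.toNat) ∘ fun n => complQuot d α (n + 1) :=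
    funext fun n => by simp [floor_complQuot hd hcf]
  rw [this]
  exact hX.map _

end PartialQuotients

theorem ultimatelyPeriodic_qconv_sub_pconv_mod {d : ℕ → ℕ} (hd0 : d 0 = 0) (hd1 : 1 ≤ d 1)
    (hdp : UltimatelyPeriodic fun n => d (n + 1)) {m : ℕ} (hm : 0 < m) :
    UltimatelyPeriodic fun n => (qconv d n - pconv d n) % m := by
  have : NeZero m := ⟨hm.ne'⟩
  set r : ℕ → ZMod m := fun n => (qAux d (n + 1) : ZMod m) - pAux d (n + 1)
  have hr : UltimatelyPeriodic r :=
    .of_linearRec (hdp.map (Nat.cast : ℕ → ZMod m)) fun n => by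
      simp only [r, Function.comp, qAux_add_two, pAux_add_two]
      push_cast
      ring
  have : (fun n => (qconv d n - pconv d n) % m) = ZMod.val ∘ fun n => r (n + 1) := by
    funext n
    simp only [Function.comp, r, qconv, pconv]
    rw [← ZMod.val_natCast, Nat.cast_sub (pAux_le_qAux hd0 hd1 n)]
  rw [this]
  exact (hr.comp_add 1).map _

theorem qn_sub_pn_mod_ultimately_periodic_general (α : ℝ)
    (hquad : QuadraticIrrational α) (d : ℕ → ℕ) (hd0 : d 0 = 0)
    (hd : ∀ i : ℕ, 1 ≤ d (i + 1))
    (hcf : Filter.Tendsto (fun n => (pconv d n : ℝ) / (qconv d n : ℝ))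
      Filter.atTop (nhds α))
    (m : ℕ) (hm : 0 < m) :
    ∃ N T : ℕ, 0 < T ∧ ∀ n : ℕ, N ≤ n →
      (qconv d (n + T) - pconv d (n + T)) % m = (qconv d n - pconv d n) % m := by
  obtain ⟨hirr, A, B, C, hA, hα⟩ := hquad
  exact ultimatelyPeriodic_qconv_sub_pconv_mod hd0 (hd 0)
    (ultimatelyPeriodic_partialQuot hd hcf hα hirr hA) hm

theorem qn_sub_pn_mod_ultimately_periodic (α : ℝ) (hα0 : 0 < α) (hα1 : α < 1)
    (hquad : QuadraticIrrational α) (d : ℕ → ℕ) (hd0 : d 0 = 0)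
    (hd : ∀ i : ℕ, 1 ≤ d (i + 1))
    (hcf : Filter.Tendsto (fun n => (pconv d n : ℝ) / (qconv d n : ℝ))
      Filter.atTop (nhds α))
    (m : ℕ) (hm : 0 < m) :
    ∃ N T : ℕ, 0 < T ∧ ∀ n : ℕ, N ≤ n →
      (qconv d (n + T) - pconv d (n + T)) % m = (qconv d n - pconv d n) % m :=
  qn_sub_pn_mod_ultimately_periodic_general α hquad d hd0 hd hcf m hm
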